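/- Let A be the lazy renewal matrix and let B be the 2×2 integer matrix with rows (1,1) and (1,2). For all positive integers m and n, the number of admissible words of length m whose last letter is at most n equals the sum of the two entries of the vector B^(m−1)·(1, n−1)ᵗ. -/

import Mathlib

/-- A finite word is admissible for `A` if consecutive letters are linked by `A`. -/
def Adm (A : ℕ+ → ℕ+ → Bool) (w : List ℕ+) : Prop :=
  List.Chain' (fun a b => A a b = true) w

/-- `L(m,n)`: admissible words of length `m` whose last letter is at most `n`. -/
def LWords (A : ℕ+ → ℕ+ → Bool) (m : ℕ) (n : ℕ+) : Set (List ℕ+) :=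
  {w : List ℕ+ | w.length = m ∧ Adm A w ∧ ∀ x ∈ w.getLast?, x ≤ n}

/-- The lazy renewal matrix: `A(i,j) = 1` iff `i = 1` or `j ∈ {i−1, i}`. -/
def lazyRenewal (i j : ℕ+) : Bool :=
  decide (i = 1 ∨ (j : ℕ) + 1 = (i : ℕ) ∨ j = i)

/-!
Split the admissible words of length `k + 1` according to their last letter. Since a word ending
in `j` extends a word ending in a predecessor `i` of `j`, and the predecessors of `j` under the
lazy renewal matrix are `1, j, j + 1`, the number of words ending in `1` and the (common) number
of words ending in any fixed `j ≥ 2` form the row vector `(1, 1) B^k`: `B` is the transfer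
matrix of this recursion on the two classes `{1}` and `{2, 3, …}`. Summing over the last letters
`1, …, n` gives `(1, 1) B^k (1, n - 1)ᵗ`.
-/

open Finset Matrix

section Chains

variable {α : Type*} [DecidableEq α]

def chainsEndingAt (pred : α → Finset α) : ℕ → α → Finset (List α)
  | 0, j => {[j]}
  | m + 1, j => (pred j).biUnion fun i =>
      (chainsEndingAt pred m i).map ⟨(· ++ [j]), List.append_left_injective [j]⟩

variable {R : α → α → Prop} {pred : α → Finset α}

theorem mem_chainsEndingAt (hR : ∀ i j, R i j ↔ i ∈ pred j) (m : ℕ) (j : α) (w : List α) :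
    w ∈ chainsEndingAt pred m j ↔
      w.length = m + 1 ∧ List.IsChain R w ∧ w.getLast? = some j := by
  induction m generalizing j w with
  | zero =>
    constructor
    · rintro hw
      rw [mem_singleton.1 hw]
      exact ⟨rfl, List.isChain_singleton j, rfl⟩
    · rintro ⟨hlen, -, hlast⟩
      obtain ⟨a, rfl⟩ := List.length_eq_one_iff.1 hlen
      simp_all [chainsEndingAt]
  | succ m ih =>
    simp only [chainsEndingAt, mem_biUnion, mem_map, Function.Embedding.coeFn_mk, ih, ← hR]
    constructor
    · rintro ⟨i, hij, v, ⟨hlen, hchain, hlast⟩, rfl⟩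
      refine ⟨by simp [hlen], List.isChain_append.2 ⟨hchain, List.isChain_singleton j, ?_⟩,
        by simp⟩
      simpa [hlast] using hij
    · rintro ⟨hlen, hchain, hlast⟩
      obtain ⟨v, a, rfl⟩ := w.eq_nil_or_concat' |>.resolve_left (by rintro rfl; simp at hlen)
      obtain rfl : a = j := by simpa using hlast
      have hv : v ≠ [] := by rintro rfl; simp at hlen
      obtain ⟨hchain, -, hlink⟩ := List.isChain_append.1 hchain
      exact ⟨v.getLast hv, hlink _ (List.getLast?_eq_some_getLast hv) _ rfl, v,
        ⟨by simpa using hlen, hchain, List.getLast?_eq_some_getLast hv⟩, rfl⟩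

theorem disjoint_chainsEndingAt (hR : ∀ i j, R i j ↔ i ∈ pred j) (m : ℕ) {i j : α}
    (hij : i ≠ j) : Disjoint (chainsEndingAt pred m i) (chainsEndingAt pred m j) := by
  rw [Finset.disjoint_left]
  intro w hi hj
  rw [mem_chainsEndingAt hR] at hi hj
  exact hij (Option.some_injective _ (hi.2.2.symm.trans hj.2.2))

theorem card_chainsEndingAt_succ (hR : ∀ i j, R i j ↔ i ∈ pred j) (m : ℕ) (j : α) :
    #(chainsEndingAt pred (m + 1) j) = ∑ i ∈ pred j, #(chainsEndingAt pred m i) := by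
  rw [chainsEndingAt, card_biUnion]
  · simp only [card_map]
  · intro i _ i' _ hii'
    exact (disjoint_map _).2 (disjoint_chainsEndingAt hR m hii')

end Chains

theorem LWords_succ_eq_biUnion {A : ℕ+ → ℕ+ → Bool} {pred : ℕ+ → Finset ℕ+}
    (hA : ∀ i j, A i j = true ↔ i ∈ pred j) (m : ℕ) (n : ℕ+) :
    LWords A (m + 1) n = ↑((Icc 1 n).biUnion (chainsEndingAt pred m)) := by
  ext w
  simp only [LWords, Adm, coe_biUnion, coe_Icc, Set.mem_Icc, Set.mem_iUnion,
    mem_coe, mem_chainsEndingAt hA, exists_prop]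
  constructor
  · rintro ⟨hlen, hchain, hlast⟩
    obtain ⟨j, hj⟩ := Option.ne_none_iff_exists'.1 (by simp [← List.length_pos_iff, hlen] :
      w.getLast? ≠ none)
    exact ⟨j, ⟨one_le, hlast j hj⟩, hlen, hchain, hj⟩
  · rintro ⟨j, ⟨-, hjn⟩, hlen, hchain, hj⟩
    exact ⟨hlen, hchain, by simpa [hj] using hjn⟩

def lazyRenewalPred (j : ℕ+) : Finset ℕ+ := {1, j, j + 1}

theorem lazyRenewal_iff (i j : ℕ+) : lazyRenewal i j = true ↔ i ∈ lazyRenewalPred j := by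
  simp only [lazyRenewal, decide_eq_true_iff, lazyRenewalPred, mem_insert, mem_singleton,
    ← PNat.coe_inj, PNat.add_coe, PNat.one_coe]
  omega

local notation "B" => (!![1, 1; 1, 2] : Matrix (Fin 2) (Fin 2) ℕ)

theorem vecMul_B_zero (v : Fin 2 → ℕ) : (v ᵥ* B) 0 = v 0 + v 1 := by
  simp [vecMul, dotProduct, Fin.sum_univ_two]

theorem vecMul_B_one (v : Fin 2 → ℕ) : (v ᵥ* B) 1 = v 0 + 2 * v 1 := by
  simp [vecMul, dotProduct, Fin.sum_univ_two]
  ring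

theorem card_chainsEndingAt_lazyRenewalPred (m : ℕ) :
    #(chainsEndingAt lazyRenewalPred m 1) = (![1, 1] ᵥ* B ^ m) 0 ∧
      ∀ j, 1 < j → #(chainsEndingAt lazyRenewalPred m j) = (![1, 1] ᵥ* B ^ m) 1 := by
  induction m with
  | zero => exact ⟨by simp [chainsEndingAt], fun j _ => by simp [chainsEndingAt]⟩
  | succ m ih =>
    obtain ⟨ih_one, ih_gt⟩ := ih
    simp only [pow_succ, ← vecMul_vecMul, vecMul_B_zero, vecMul_B_one,
      card_chainsEndingAt_succ lazyRenewal_iff]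
    refine ⟨?_, fun j hj => ?_⟩
    · rw [show lazyRenewalPred 1 = {1, 2} from rfl, sum_pair (by decide), ih_one,
        ih_gt 2 (by decide)]
    · have hj' : 1 < j + 1 := hj.trans (PNat.lt_add_right j 1)
      rw [lazyRenewalPred, sum_insert (by simp [hj.ne, hj'.ne]),
        sum_pair (PNat.lt_add_right j 1).ne, ih_one, ih_gt j hj, ih_gt (j + 1) hj']
      ring

theorem ncard_LWords_lazyRenewal (k : ℕ) (n : ℕ+) :
    (LWords lazyRenewal (k + 1) n).ncard =
      (![1, 1] ᵥ* B ^ k) 0 + ((n : ℕ) - 1) * (![1, 1] ᵥ* B ^ k) 1 := by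
  obtain ⟨h_one, h_gt⟩ := card_chainsEndingAt_lazyRenewalPred k
  rw [LWords_succ_eq_biUnion lazyRenewal_iff, Set.ncard_coe_finset,
    card_biUnion fun i _ j _ hij => disjoint_chainsEndingAt lazyRenewal_iff k hij,
    Icc_eq_cons_Ioc one_le, sum_cons, h_one, sum_congr rfl fun j hj => h_gt j (mem_Ioc.1 hj).1,
    sum_const, PNat.card_Ioc, PNat.one_coe, smul_eq_mul, mul_comm]

theorem mulVec_zero_add_mulVec_one {R : Type*} [CommSemiring R] (M : Matrix (Fin 2) (Fin 2) R)
    (v : Fin 2 → R) :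
    (M *ᵥ v) 0 + (M *ᵥ v) 1 = (![1, 1] ᵥ* M) 0 * v 0 + (![1, 1] ᵥ* M) 1 * v 1 := by
  simpa [dotProduct, Fin.sum_univ_two] using dotProduct_mulVec ![1, 1] M v

/-- for the lazy renewal matrix and the 2×2 matrix `B` with rows `(1,1)`
and `(1,2)`, for all `m ≥ 1` and `n`, the number of admissible words of length `m`
whose last letter is at most `n` equals the sum of the two entries of the vector
`B^(m−1)·(1, n−1)ᵗ`. -/
theorem stmt14 (m : ℕ) (hm : 1 ≤ m) (n : ℕ+) :
    (LWords lazyRenewal m n).ncard =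
      ((!![1, 1; 1, 2] : Matrix (Fin 2) (Fin 2) ℕ) ^ (m - 1)).mulVec
        ![1, (n : ℕ) - 1] 0 +
      ((!![1, 1; 1, 2] : Matrix (Fin 2) (Fin 2) ℕ) ^ (m - 1)).mulVec
        ![1, (n : ℕ) - 1] 1 := by
  obtain ⟨k, rfl⟩ : ∃ k, m = k + 1 := ⟨m - 1, by omega⟩
  rw [Nat.add_sub_cancel, ncard_LWords_lazyRenewal, mulVec_zero_add_mulVec_one]
  simp [mul_comm]
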